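/- Let p ≥ 7 be a prime and let M be the p×p tridiagonal integer matrix with diagonal entries M_{11} = M_{pp} = p−1, M_{ii} = p−2 for 2 ≤ i ≤ p−1, sub- and super-diagonal entries equal to 1, and all other entries 0. If x₁,…,x_p are non-negative integers satisfying M(x₁,…,x_p)ᵗ ≤ (p−1)!·𝟏, then ∑_{i=1}^p x_i ≤ (p−1)! − ⌈p/3⌉ + 2. -/

import Mathlib

/-!
By Wilson's theorem `(p - 1)! + 1 = p * q`, and every row of `M` sums to `p`, so the integer
vector `e := q𝟏 - x` satisfies `M e ≥ 𝟏`. For such an `e`, at each index `k` either `e k ≥ 1`,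
or `e k ≤ 0` and then row `k` forces the positive parts of the other entries it touches to sum
to at least `1 + (p - 2) (e k)⁻`. Summing over `k`, each positive part is counted at most three
times, so `p + (p - 2) ∑ e⁻ ≤ 3 ∑ e⁺`, whence `p ≤ 3 ∑ e = 3 ((p - 1)! + 1 - ∑ x)`.
-/

open scoped BigOperators

/-- The `p×p` tridiagonal matrix with diagonal `(p−1, p−2, …, p−2, p−1)`,
sub- and super-diagonal entries `1`, and all other entries `0`. -/
def triMatrix (p : ℕ) (i j : Fin p) : ℕ :=
  if (i : ℕ) = (j : ℕ) then
    (if (i : ℕ) = 0 ∨ (i : ℕ) = p - 1 then p - 1 else p - 2)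
  else if (i : ℕ) + 1 = (j : ℕ) ∨ (j : ℕ) + 1 = (i : ℕ) then 1 else 0

namespace Matrix

variable {ι : Type*} [Fintype ι]

theorem diag_mul_le_mulVec {R : Type*} [Semiring R] [PartialOrder R] [IsOrderedRing R]
    {A : Matrix ι ι R} (hA : ∀ i j, 0 ≤ A i j) {v : ι → R} (hv : 0 ≤ v) (k : ι) :
    A k k * v k ≤ (A *ᵥ v) k :=
  Finset.single_le_sum (f := fun j => A k j * v j) (fun j _ => mul_nonneg (hA k j) (hv j))
    (Finset.mem_univ k)

theorem one_add_diag_mul_negPart_le {A : Matrix ι ι ℤ} (hA : ∀ i j, 0 ≤ A i j) {e : ι → ℤ}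
    {k : ι} (hk : 1 ≤ (A *ᵥ e) k) :
    1 + A k k * (e k)⁻ ≤ (A *ᵥ e⁺) k - A k k * (e k)⁺ + (e k)⁺ := by
  have hsplit : (A *ᵥ e) k = (A *ᵥ e⁺) k - (A *ᵥ e⁻) k := by
    rw [← Pi.sub_apply, ← mulVec_sub, posPart_sub_negPart]
  rcases le_or_gt (e k) 0 with hle | hpos
  · have hdiag := diag_mul_le_mulVec hA (negPart_nonneg e) k
    rw [Pi.negPart_apply] at hdiag
    rw [posPart_eq_zero.2 hle]
    linarith
  · have hdiag := diag_mul_le_mulVec hA (posPart_nonneg e) k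
    rw [Pi.posPart_apply, posPart_eq_self.2 hpos.le] at hdiag
    rw [negPart_eq_zero.2 hpos.le, posPart_eq_self.2 hpos.le]
    linarith

theorem card_le_mul_sum_of_one_le_mulVec {A : Matrix ι ι ℤ} {c d : ℤ} (hA : ∀ i j, 0 ≤ A i j)
    (hdiag : ∀ i, d ≤ A i i) (hcol : ∀ j, ∑ i, A i j ≤ A j j + c) (hcd : c + 1 ≤ d)
    {e : ι → ℤ} (he : ∀ i, 1 ≤ (A *ᵥ e) i) :
    (Fintype.card ι : ℤ) ≤ (c + 1) * ∑ i, e i := by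
  have hrow : ∀ k, 1 + d * (e k)⁻ ≤ (A *ᵥ e⁺) k - A k k * (e k)⁺ + (e k)⁺ := fun k =>
    (add_le_add_right (mul_le_mul_of_nonneg_right (hdiag k) (negPart_nonneg _)) 1).trans
      (one_add_diag_mul_negPart_le hA (he k))
  have hcount : ∑ k, ((A *ᵥ e⁺) k - A k k * (e k)⁺ + (e k)⁺) ≤ (c + 1) * ∑ k, (e k)⁺ := calc
    ∑ k, ((A *ᵥ e⁺) k - A k k * (e k)⁺ + (e k)⁺)
        = ∑ j, (∑ i, A i j - A j j + 1) * (e j)⁺ := by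
      simp only [mulVec, dotProduct, Pi.posPart_apply, Finset.sum_add_distrib,
        Finset.sum_sub_distrib, add_mul, sub_mul, one_mul, Finset.sum_mul]
      rw [Finset.sum_comm]
    _ ≤ ∑ j, (c + 1) * (e j)⁺ := Finset.sum_le_sum fun j _ =>
      mul_le_mul_of_nonneg_right (by linarith [hcol j]) (posPart_nonneg _)
    _ = (c + 1) * ∑ k, (e k)⁺ := (Finset.mul_sum ..).symm
  have hlower : (Fintype.card ι : ℤ) + d * ∑ k, (e k)⁻ ≤ (c + 1) * ∑ k, (e k)⁺ := by
    have hconst : ∑ k, (1 + d * (e k)⁻) = Fintype.card ι + d * ∑ k, (e k)⁻ := by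
      simp [Finset.sum_add_distrib, Finset.mul_sum]
    linarith [Finset.sum_le_sum fun k (_ : k ∈ Finset.univ) => hrow k]
  have hdecomp : ∑ i, e i = ∑ k, (e k)⁺ - ∑ k, (e k)⁻ := by
    rw [← Finset.sum_sub_distrib]
    simp only [posPart_sub_negPart]
  have hneg : 0 ≤ ∑ k, (e k)⁻ := Finset.sum_nonneg fun k _ => negPart_nonneg _
  rw [hdecomp]
  linear_combination hlower + mul_nonneg (sub_nonneg.2 hcd) hneg

theorem one_le_mulVec_natCast_sub {m n : Type*} [Fintype n] {A : Matrix m n ℕ} {s q N : ℕ}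
    (hA : ∀ i, ∑ j, A i j = s) (hq : N + 1 = s * q) {x : n → ℕ} (hx : ∀ i, (A *ᵥ x) i ≤ N)
    (i : m) : 1 ≤ (A.map (↑) *ᵥ fun j => (q : ℤ) - x j) i := by
  have hAx : (((A *ᵥ x) i : ℕ) : ℤ) ≤ N := by exact_mod_cast hx i
  have hAq : ((∑ j, A i j : ℕ) : ℤ) * q = N + 1 := by
    rw [hA]
    exact_mod_cast hq.symm
  simp only [mulVec, dotProduct, map_apply, mul_sub, Finset.sum_sub_distrib, ← Finset.sum_mul]
    at hAx ⊢
  push_cast at hAx hAq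
  linarith

end Matrix

theorem triMatrix_comm (p : ℕ) (i j : Fin p) : triMatrix p i j = triMatrix p j i := by
  unfold triMatrix
  split_ifs <;> omega

theorem sub_two_le_triMatrix_self (p : ℕ) (i : Fin p) : p - 2 ≤ triMatrix p i i := by
  unfold triMatrix
  split_ifs <;> omega

theorem sum_triMatrix (p : ℕ) (hp : 2 ≤ p) (i : Fin p) : ∑ j, triMatrix p i j = p := by
  have hsplit : ∀ j : Fin p, triMatrix p i j =
      (if (j : ℕ) = i then (if (i : ℕ) = 0 ∨ (i : ℕ) = p - 1 then p - 1 else p - 2) else 0)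
        + (if (j : ℕ) = i + 1 then 1 else 0)
        + (if (j : ℕ) = i - 1 then (if 0 < (i : ℕ) then 1 else 0) else 0) := by
    intro j
    unfold triMatrix
    split_ifs <;> omega
  simp only [hsplit, Finset.sum_add_distrib]
  rw [Fin.sum_univ_eq_sum_range (fun j => if j = (i : ℕ) then _ else 0),
    Fin.sum_univ_eq_sum_range (fun j => if j = (i : ℕ) + 1 then 1 else 0),
    Fin.sum_univ_eq_sum_range (fun j => if j = (i : ℕ) - 1 then _ else 0)]
  simp only [Finset.sum_ite_eq', Finset.mem_range]
  have := i.isLt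
  split_ifs <;> omega

theorem sum_triMatrix_le (p : ℕ) (hp : 2 ≤ p) (j : Fin p) :
    ∑ i, triMatrix p i j ≤ triMatrix p j j + 2 := by
  have := sub_two_le_triMatrix_self p j
  simp only [triMatrix_comm p _ j, sum_triMatrix p hp j]
  omega

theorem Nat.Prime.dvd_factorial_sub_one_add_one {p : ℕ} (hp : p.Prime) :
    p ∣ (p - 1).factorial + 1 := by
  have := Fact.mk hp
  rw [← ZMod.natCast_eq_zero_iff]
  push_cast [ZMod.wilsons_lemma]
  ring

/-- for a prime `p ≥ 7` and non-negative integers `x₁,…,x_p` with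
`M x ≤ (p−1)!·𝟏` entrywise, `∑ xᵢ ≤ (p−1)! − ⌈p/3⌉ + 2`. -/
theorem tridiagonal_system_sum_bound (p : ℕ) (hp : p.Prime) (hp7 : 7 ≤ p)
    (x : Fin p → ℕ)
    (hx : ∀ i : Fin p, ∑ j : Fin p, triMatrix p i j * x j ≤ Nat.factorial (p - 1)) :
    ∑ i : Fin p, x i ≤ Nat.factorial (p - 1) - ⌈(p : ℚ) / 3⌉₊ + 2 := by
  obtain ⟨q, hq⟩ := hp.dvd_factorial_sub_one_add_one
  set A : Matrix (Fin p) (Fin p) ℤ := (Matrix.of (triMatrix p)).map (↑)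
  have hdiag : ∀ i, (p : ℤ) - 2 ≤ A i i := fun i => by
    have := sub_two_le_triMatrix_self p i
    simp only [A, Matrix.map_apply, Matrix.of_apply]
    omega
  have hcol : ∀ j, ∑ i, A i j ≤ A j j + 2 := fun j => by
    simp only [A, Matrix.map_apply, Matrix.of_apply]
    exact_mod_cast sum_triMatrix_le p (by omega) j
  have hbound := Matrix.card_le_mul_sum_of_one_le_mulVec (fun i j => Int.natCast_nonneg _)
    hdiag hcol (by omega) (Matrix.one_le_mulVec_natCast_sub (sum_triMatrix p (by omega)) hq hx)
  simp only [Finset.sum_sub_distrib, Finset.sum_const, Finset.card_univ, Fintype.card_fin,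
    nsmul_eq_mul] at hbound
  have hsum : 3 * ∑ i, x i + p ≤ 3 * (p - 1).factorial + 3 := by
    have hqZ : ((p - 1).factorial + 1 : ℤ) = p * q := by exact_mod_cast hq
    zify
    linarith
  have hceil : ⌈(p : ℚ) / 3⌉₊ ≤ (p + 2) / 3 := Nat.ceil_le.2 <| by
    rw [div_le_iff₀ (by norm_num)]
    exact_mod_cast (by omega : p ≤ (p + 2) / 3 * 3)
  omega
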